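/- arXiv:1601.06965 — 2 statements merged into one kernel-verified Lean document; each statement's English description precedes it below -/
import Mathlib

section
/- If A and B are crossing thin cuts with c(A) = m and c(B) = n, then after possibly replacing A by A* and/or B by B*, both corners A∩B* and A*∩B are thin cuts with capacities m and n respectively. -/
open Set

variable {V : Type*}

def cobound (G : SimpleGraph V) (A : Set V) : Set (Sym2 V) :=
  {e | e ∈ G.edgeSet ∧ ∃ u v, e = s(u, v) ∧ u ∈ A ∧ v ∉ A}

def IsCut (G : SimpleGraph V) (A : Set V) : Prop := (cobound G A).Finite

noncomputable def cap (G : SimpleGraph V) (c : Sym2 V → ℕ) (A : Set V) : ℕ :=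
  ∑ᶠ e ∈ cobound G A, c e

structure IsRay (G : SimpleGraph V) (r : ℕ → V) : Prop where
  inj : Function.Injective r
  adj : ∀ n, G.Adj (r n) (r (n + 1))

def PtIn (G : SimpleGraph V) (A : Set V) :
    V ⊕ {r : ℕ → V // IsRay G r} → Prop
  | Sum.inl v => v ∈ A
  | Sum.inr r => ∃ N, ∀ n ≥ N, r.1 n ∈ A

def Separates (G : SimpleGraph V) (A : Set V)
    (u v : V ⊕ {r : ℕ → V // IsRay G r}) : Prop :=
  (PtIn G A u ∧ PtIn G Aᶜ v) ∨ (PtIn G Aᶜ u ∧ PtIn G A v)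

def ThinWrt (G : SimpleGraph V) (c : Sym2 V → ℕ) (A : Set V)
    (u v : V ⊕ {r : ℕ → V // IsRay G r}) : Prop :=
  IsCut G A ∧ Separates G A u v ∧
    ∀ B : Set V, IsCut G B → Separates G B u v → cap G c A ≤ cap G c B

/-- A cut is thin if it is thin with respect to some pair of vertices or ends. -/
def Thin (G : SimpleGraph V) (c : Sym2 V → ℕ) (A : Set V) : Prop :=
  ∃ u v, ThinWrt G c A u v

def Nested (A B : Set V) : Prop :=
  A ∩ B = ∅ ∨ A ∩ Bᶜ = ∅ ∨ Aᶜ ∩ B = ∅ ∨ Aᶜ ∩ Bᶜ = ∅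

/-!
Cut capacity is submodular: an edge leaving `A ∩ B*` or `A* ∩ B` leaves `A` or `B`, and an edge
leaving both corners leaves both `A` and `B`, so `c(A ∩ B*) + c(A* ∩ B) ≤ c(A) + c(B)`.
Since every vertex or end lies on one side of a cut, `A` and `B` can be oriented so that
`A ∩ B*` separates the pair for which `A` is thin and `A* ∩ B` the pair for which `B` is thin,
unless the corners separate the two pairs diagonally. In the first case minimality bounds the
corners below by `c(A)` and `c(B)`, and submodularity forces equality. In the diagonal case the
submodular inequalities for `(A, B)` and `(A, B*)` add up to force `c(A) = c(B)` and the claim.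
-/

variable {G : SimpleGraph V} {c : Sym2 V → ℕ} {A B C : Set V}

lemma finsum_mem_le_finsum_mem_of_subset {α M : Type*} [AddCommMonoid M] [PartialOrder M]
    [CanonicallyOrderedAdd M] {f : α → M} {s t : Set α} (hst : s ⊆ t) (ht : t.Finite) :
    ∑ᶠ i ∈ s, f i ≤ ∑ᶠ i ∈ t, f i := by
  rw [← finsum_mem_add_sdiff hst ht]
  exact le_self_add

lemma mk_mem_cobound {u v : V} (h : G.Adj u v) (huv : ¬(u ∈ A ↔ v ∈ A)) :
    s(u, v) ∈ cobound G A := by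
  by_cases hu : u ∈ A
  · exact ⟨h, u, v, rfl, hu, fun hv => huv (iff_of_true hu hv)⟩
  · exact ⟨h, v, u, Sym2.eq_swap, by tauto, hu⟩

lemma cobound_compl (G : SimpleGraph V) (A : Set V) : cobound G Aᶜ = cobound G A := by
  ext e
  constructor <;>
  · rintro ⟨he, u, v, rfl, hu, hv⟩
    exact ⟨he, v, u, Sym2.eq_swap, by simpa using hv, by simpa using hu⟩

lemma cap_compl (G : SimpleGraph V) (c : Sym2 V → ℕ) (A : Set V) :
    cap G c Aᶜ = cap G c A := by
  rw [cap, cobound_compl, cap]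

lemma cap_eq_of_eq_or_eq_compl {A' : Set V} (h : A' = A ∨ A' = Aᶜ) :
    cap G c A' = cap G c A := by
  rcases h with rfl | rfl
  · rfl
  · exact cap_compl G c A

lemma cobound_inter_compl_subset : cobound G (A ∩ Bᶜ) ⊆ cobound G A ∪ cobound G B := by
  rintro e ⟨he, u, v, rfl, ⟨huA, huB⟩, hv⟩
  by_cases hvA : v ∈ A
  · have hvB : v ∈ B := by_contra fun hvB => hv ⟨hvA, hvB⟩
    exact Or.inr ⟨he, v, u, Sym2.eq_swap, hvB, huB⟩
  · exact Or.inl ⟨he, u, v, rfl, huA, hvA⟩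

lemma cobound_inter_compl_inter_subset :
    cobound G (A ∩ Bᶜ) ∩ cobound G (Aᶜ ∩ B) ⊆ cobound G A ∩ cobound G B := by
  rintro e ⟨⟨he, u, v, rfl, ⟨huA, huB⟩, -⟩, ⟨-, u', v', he', ⟨hu'A, hu'B⟩, -⟩⟩
  rcases Sym2.eq_iff.mp he' with ⟨rfl, -⟩ | ⟨-, rfl⟩
  · exact absurd huA hu'A
  · exact ⟨⟨he, u, v, rfl, huA, hu'A⟩, ⟨he, v, u, Sym2.eq_swap, hu'B, huB⟩⟩

namespace IsCut

lemma compl (h : IsCut G A) : IsCut G Aᶜ := by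
  rwa [IsCut, cobound_compl]

lemma inter_compl (hA : IsCut G A) (hB : IsCut G B) : IsCut G (A ∩ Bᶜ) :=
  (hA.union hB).subset cobound_inter_compl_subset

lemma compl_inter (hA : IsCut G A) (hB : IsCut G B) : IsCut G (Aᶜ ∩ B) := by
  rw [inter_comm]
  exact hB.inter_compl hA

end IsCut

lemma cap_inter_compl_add_cap_compl_inter_le (hA : IsCut G A) (hB : IsCut G B) :
    cap G c (A ∩ Bᶜ) + cap G c (Aᶜ ∩ B) ≤ cap G c A + cap G c B := by
  have hAB : (cobound G A ∪ cobound G B).Finite := hA.union hB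
  have h₁ : cobound G (A ∩ Bᶜ) ⊆ cobound G A ∪ cobound G B := cobound_inter_compl_subset
  have h₂ : cobound G (Aᶜ ∩ B) ⊆ cobound G A ∪ cobound G B := by
    rw [inter_comm, union_comm]
    exact cobound_inter_compl_subset
  unfold cap
  rw [← finsum_mem_union_inter (hAB.subset h₁) (hAB.subset h₂), ← finsum_mem_union_inter hA hB]
  exact add_le_add (finsum_mem_le_finsum_mem_of_subset (union_subset h₁ h₂) hAB)
    (finsum_mem_le_finsum_mem_of_subset cobound_inter_compl_inter_subset (hA.inter_of_left _))

namespace IsRay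

variable {r : ℕ → V}

lemma injective_edge (hr : IsRay G r) : Function.Injective fun n => s(r n, r (n + 1)) := by
  intro a b hab
  rcases Sym2.eq_iff.mp hab with ⟨h, -⟩ | ⟨h₁, h₂⟩
  · exact hr.inj h
  · have := hr.inj h₁
    have := hr.inj h₂
    omega

lemma exists_forall_ge_mem_iff (hr : IsRay G r) (hB : IsCut G B) :
    ∃ N, ∀ n ≥ N, (r n ∈ B ↔ r N ∈ B) := by
  obtain ⟨N, hN⟩ := (hB.preimage hr.injective_edge.injOn).bddAbove
  refine ⟨N + 1, fun n hn => ?_⟩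
  induction n, hn using Nat.le_induction with
  | base => rfl
  | succ n hn ih =>
    rw [← ih]
    by_contra h
    have := hN (mk_mem_cobound (hr.adj n) fun h' => h h'.symm)
    omega

lemma eventually_mem_or_eventually_mem_compl (hr : IsRay G r) (hB : IsCut G B) :
    (∃ N, ∀ n ≥ N, r n ∈ B) ∨ ∃ N, ∀ n ≥ N, r n ∈ Bᶜ := by
  obtain ⟨N, hN⟩ := hr.exists_forall_ge_mem_iff hB
  by_cases h : r N ∈ B
  · exact Or.inl ⟨N, fun n hn => (hN n hn).mpr h⟩
  · exact Or.inr ⟨N, fun n hn hrn => h ((hN n hn).mp hrn)⟩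

end IsRay

section

variable {u v : V ⊕ {r : ℕ → V // IsRay G r}}

lemma PtIn.mono (hAB : A ⊆ B) : ∀ {p}, PtIn G A p → PtIn G B p
  | Sum.inl _, h => hAB h
  | Sum.inr _, ⟨N, hN⟩ => ⟨N, fun n hn => hAB (hN n hn)⟩

lemma PtIn.inter : ∀ {p}, PtIn G A p → PtIn G B p → PtIn G (A ∩ B) p
  | Sum.inl _, hA, hB => ⟨hA, hB⟩
  | Sum.inr _, ⟨N, hN⟩, ⟨M, hM⟩ =>
    ⟨max N M, fun n hn => ⟨hN n (le_of_max_le_left hn), hM n (le_of_max_le_right hn)⟩⟩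

lemma ptIn_or_ptIn_compl (hB : IsCut G B) :
    ∀ p : V ⊕ {r : ℕ → V // IsRay G r}, PtIn G B p ∨ PtIn G Bᶜ p
  | Sum.inl v => em (v ∈ B)
  | Sum.inr r => r.2.eventually_mem_or_eventually_mem_compl hB

lemma Separates.symm (h : Separates G A u v) : Separates G A v u :=
  (Or.symm h).imp And.symm And.symm

lemma Separates.compl (h : Separates G A u v) : Separates G Aᶜ u v := by
  unfold Separates
  rw [compl_compl]
  exact Or.symm h

lemma Separates.inter_or_inter_compl (h : Separates G A u v) (hB : IsCut G B) :
    Separates G (A ∩ B) u v ∨ Separates G (A ∩ Bᶜ) u v := by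
  wlog hu : PtIn G A u ∧ PtIn G Aᶜ v generalizing u v
  · have hv := h.resolve_left hu
    exact (this h.symm ⟨hv.2, hv.1⟩).imp Separates.symm Separates.symm
  obtain ⟨hu, hv⟩ := hu
  rcases ptIn_or_ptIn_compl hB u with huB | huB
  · exact Or.inl (Or.inl ⟨hu.inter huB, hv.mono (compl_subset_compl.mpr inter_subset_left)⟩)
  · exact Or.inr (Or.inl ⟨hu.inter huB, hv.mono (compl_subset_compl.mpr inter_subset_left)⟩)

lemma Separates.inter_or_compl_inter (h : Separates G B u v) (hA : IsCut G A) :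
    Separates G (A ∩ B) u v ∨ Separates G (Aᶜ ∩ B) u v := by
  rw [inter_comm A, inter_comm Aᶜ]
  exact h.inter_or_inter_compl hA

namespace ThinWrt

lemma cap_le (h : ThinWrt G c A u v) (hC : IsCut G C) (hs : Separates G C u v) :
    cap G c A ≤ cap G c C :=
  h.2.2 C hC hs

lemma of_cap_le (h : ThinWrt G c A u v) (hC : IsCut G C) (hs : Separates G C u v)
    (hle : cap G c C ≤ cap G c A) : ThinWrt G c C u v :=
  ⟨hC, hs, fun _ hD hsD => hle.trans (h.cap_le hD hsD)⟩

lemma compl (h : ThinWrt G c A u v) : ThinWrt G c Aᶜ u v :=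
  ⟨h.1.compl, h.2.1.compl, fun _ hD hsD => (cap_compl G c A).trans_le (h.cap_le hD hsD)⟩

end ThinWrt

def ThinCorners (G : SimpleGraph V) (c : Sym2 V → ℕ) (A B : Set V) : Prop :=
  Thin G c (A ∩ Bᶜ) ∧ cap G c (A ∩ Bᶜ) = cap G c A ∧
    Thin G c (Aᶜ ∩ B) ∧ cap G c (Aᶜ ∩ B) = cap G c B

variable {u₁ v₁ u₂ v₂ : V ⊕ {r : ℕ → V // IsRay G r}}

lemma thinCorners_of_separates (hA : ThinWrt G c A u₁ v₁) (hB : ThinWrt G c B u₂ v₂)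
    (h₁ : Separates G (A ∩ Bᶜ) u₁ v₁) (h₂ : Separates G (Aᶜ ∩ B) u₂ v₂) :
    ThinCorners G c A B := by
  have hcut₁ := hA.1.inter_compl hB.1
  have hcut₂ := hA.1.compl_inter hB.1
  have le₁ := hA.cap_le hcut₁ h₁
  have le₂ := hB.cap_le hcut₂ h₂
  have := cap_inter_compl_add_cap_compl_inter_le (c := c) hA.1 hB.1
  have eq₁ : cap G c (A ∩ Bᶜ) = cap G c A := by omega
  have eq₂ : cap G c (Aᶜ ∩ B) = cap G c B := by omega
  exact ⟨⟨u₁, v₁, hA.of_cap_le hcut₁ h₁ eq₁.le⟩, eq₁, ⟨u₂, v₂, hB.of_cap_le hcut₂ h₂ eq₂.le⟩, eq₂⟩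

lemma thinCorners_of_separates_diagonal (hA : ThinWrt G c A u₁ v₁) (hB : ThinWrt G c B u₂ v₂)
    (h₁ : Separates G (A ∩ B) u₁ v₁) (h₁' : Separates G (Aᶜ ∩ Bᶜ) u₁ v₁)
    (h₂ : Separates G (A ∩ Bᶜ) u₂ v₂) (h₂' : Separates G (Aᶜ ∩ B) u₂ v₂) :
    ThinCorners G c A B := by
  have hcut₁ := hA.1.inter_compl hB.1
  have hcut₂ := hA.1.compl_inter hB.1
  have le₁ := hB.cap_le hcut₁ h₂
  have le₂ := hB.cap_le hcut₂ h₂'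
  have le₁' := hA.cap_le (by simpa using hA.1.inter_compl hB.1.compl) h₁
  have le₂' := hA.cap_le (hA.1.compl_inter hB.1.compl) h₁'
  have sub := cap_inter_compl_add_cap_compl_inter_le (c := c) hA.1 hB.1
  have sub' := cap_inter_compl_add_cap_compl_inter_le (c := c) hA.1 hB.1.compl
  rw [compl_compl, cap_compl] at sub'
  have eq₁ : cap G c (A ∩ Bᶜ) = cap G c A := by omega
  have eq₂ : cap G c (Aᶜ ∩ B) = cap G c B := by omega
  exact ⟨⟨u₂, v₂, hB.of_cap_le hcut₁ h₂ (by omega)⟩, eq₁,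
    ⟨u₂, v₂, hB.of_cap_le hcut₂ h₂' eq₂.le⟩, eq₂⟩

lemma exists_thinCorners_of_separates_inter_compl (hA : ThinWrt G c A u₁ v₁)
    (hB : ThinWrt G c B u₂ v₂) (h₁ : Separates G (A ∩ Bᶜ) u₁ v₁) :
    ∃ A' B', (A' = A ∨ A' = Aᶜ) ∧ (B' = B ∨ B' = Bᶜ) ∧ ThinCorners G c A' B' := by
  rcases hB.2.1.inter_or_compl_inter hA.1 with h₂ | h₂
  · rcases hA.2.1.compl.inter_or_inter_compl hB.1 with h₃ | h₃
    · rcases hB.2.1.compl.inter_or_compl_inter hA.1 with h₄ | h₄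
      · refine ⟨Aᶜ, Bᶜ, .inr rfl, .inr rfl, thinCorners_of_separates hA.compl hB.compl ?_ ?_⟩
        · rwa [compl_compl]
        · rwa [compl_compl]
      · exact ⟨A, Bᶜ, .inl rfl, .inr rfl,
          thinCorners_of_separates_diagonal hA hB.compl h₁ (by rwa [compl_compl])
            (by rwa [compl_compl]) h₄⟩
    · exact ⟨Aᶜ, B, .inr rfl, .inl rfl,
        thinCorners_of_separates hA.compl hB h₃ (by rwa [compl_compl])⟩
  · exact ⟨A, B, .inl rfl, .inl rfl, thinCorners_of_separates hA hB h₁ h₂⟩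

lemma exists_thinCorners (hA : ThinWrt G c A u₁ v₁) (hB : ThinWrt G c B u₂ v₂) :
    ∃ A' B', (A' = A ∨ A' = Aᶜ) ∧ (B' = B ∨ B' = Bᶜ) ∧ ThinCorners G c A' B' := by
  rcases hA.2.1.inter_or_inter_compl hB.1 with h | h
  · obtain ⟨A', B', hA', hB', hAB⟩ :=
      exists_thinCorners_of_separates_inter_compl hA hB.compl (by rwa [compl_compl])
    rw [compl_compl, or_comm] at hB'
    exact ⟨A', B', hA', hB', hAB⟩
  · exact exists_thinCorners_of_separates_inter_compl hA hB h

end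

theorem crossing_thin_corners_general (G : SimpleGraph V)
    (c : Sym2 V → ℕ)
    (A B : Set V) (m n : ℕ)
    (hA : Thin G c A) (hB : Thin G c B)
    (hm : cap G c A = m) (hn : cap G c B = n) :
    ∃ A' B' : Set V, (A' = A ∨ A' = Aᶜ) ∧ (B' = B ∨ B' = Bᶜ) ∧
      Thin G c (A' ∩ B'ᶜ) ∧ cap G c (A' ∩ B'ᶜ) = m ∧
      Thin G c (A'ᶜ ∩ B') ∧ cap G c (A'ᶜ ∩ B') = n := by
  obtain ⟨u₁, v₁, hA⟩ := hA
  obtain ⟨u₂, v₂, hB⟩ := hB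
  obtain ⟨A', B', hA', hB', thin₁, cap₁, thin₂, cap₂⟩ := exists_thinCorners hA hB
  exact ⟨A', B', hA', hB', thin₁, cap₁.trans ((cap_eq_of_eq_or_eq_compl hA').trans hm),
    thin₂, cap₂.trans ((cap_eq_of_eq_or_eq_compl hB').trans hn)⟩

/-- if `A, B` are crossing thin cuts with capacities `m, n`, then after
relabelling `A` as `A*` and/or `B` as `B*` if necessary, both `A ∩ B*` and `A* ∩ B` are
thin cuts with capacities `m` and `n` respectively. -/
theorem crossing_thin_corners (G : SimpleGraph V) (hconn : G.Connected)
    (c : Sym2 V → ℕ) (hc : ∀ e ∈ G.edgeSet, 1 ≤ c e)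
    (A B : Set V) (m n : ℕ)
    (hA : Thin G c A) (hB : Thin G c B)
    (hm : cap G c A = m) (hn : cap G c B = n)
    (hcross : ¬ Nested A B) :
    ∃ A' B' : Set V, (A' = A ∨ A' = Aᶜ) ∧ (B' = B ∨ B' = Bᶜ) ∧
      Thin G c (A' ∩ B'ᶜ) ∧ cap G c (A' ∩ B'ᶜ) = m ∧
      Thin G c (A'ᶜ ∩ B') ∧ cap G c (A'ᶜ ∩ B') = n :=
  crossing_thin_corners_general G c A B m n hA hB hm hn
end

section
/- Let 𝒞 be a nested set of tight cuts and A a tight cut not nested with some B ∈ 𝒞. Writing μ(D, 𝒞) for the number of cuts in 𝒞 not nested with D, we have μ(A∩B, 𝒞) + μ(A∩B*, 𝒞) < μ(A, 𝒞). -/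
/-!
A cut `C` of `𝒞` is nested with `B`, so it cannot cross both corners `A ∩ B` and `A ∩ Bᶜ`, and
if it crosses one of them it also crosses `A`. Hence the cuts crossing the two corners form
disjoint subsets of those crossing `A`; the inclusion is strict because `B` crosses `A` but is
nested with both corners.
-/

open Set

variable {V : Type*}

def Tight (G : SimpleGraph V) (A : Set V) : Prop :=
  (G.induce A).Connected ∧ (G.induce Aᶜ).Connected

/-- `μ(D, 𝒞)`: the number of cuts in `𝒞` not nested with `D`. -/
noncomputable def mu (D : Set V) (𝒞 : Set (Set V)) : ℕ :=
  {C | C ∈ 𝒞 ∧ ¬ Nested C D}.ncard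

theorem not_nested_iff (A B : Set V) :
    ¬ Nested A B ↔ (A ∩ B).Nonempty ∧ (A ∩ Bᶜ).Nonempty ∧
      (Aᶜ ∩ B).Nonempty ∧ (Aᶜ ∩ Bᶜ).Nonempty := by
  simp only [Nested, nonempty_iff_ne_empty]
  tauto

theorem Nested.symm {A B : Set V} (h : Nested A B) : Nested B A := by
  unfold Nested at h ⊢
  rw [inter_comm B A, inter_comm B Aᶜ, inter_comm Bᶜ A, inter_comm Bᶜ Aᶜ]
  tauto

theorem Nested.compl_right {A B : Set V} (h : Nested A B) : Nested A Bᶜ := by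
  unfold Nested at h ⊢
  rw [compl_compl]
  tauto

theorem nested_of_subset {C D : Set V} (h : D ⊆ C) : Nested C D :=
  Or.inr <| Or.inr <| Or.inl <| by rwa [← sdiff_eq_compl_inter, sdiff_eq_empty]

theorem nested_of_disjoint {C D : Set V} (h : Disjoint C D) : Nested C D :=
  Or.inl h.inter_eq

/-- Only `C ⊆ B` and `Bᶜ ⊆ C` are compatible with `C` crossing `A ∩ B`; the corner `Aᶜ ∩ Bᶜ` then
lies in `Cᶜ ∩ Aᶜ`, respectively `C ∩ Aᶜ`. -/
theorem Nested.not_nested_of_not_nested_inter {A B C : Set V} (hCB : Nested C B)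
    (hAB : (Aᶜ ∩ Bᶜ).Nonempty) (h : ¬ Nested C (A ∩ B)) : ¬ Nested C A := by
  rw [not_nested_iff] at h ⊢
  obtain ⟨⟨x₁, h₁⟩, ⟨x₂, h₂⟩, ⟨x₃, h₃⟩, ⟨x₄, h₄⟩⟩ := h
  obtain ⟨y, hy⟩ := hAB
  simp only [Nested, eq_empty_iff_forall_notMem] at hCB
  rcases hCB with hCB | hCB | hCB | hCB
  · exact absurd ⟨h₁.1, h₁.2.2⟩ (hCB x₁)
  · exact ⟨⟨x₁, by grind⟩, ⟨x₂, by grind [hCB x₂]⟩, ⟨x₃, by grind⟩, ⟨y, by grind [hCB y]⟩⟩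
  · exact absurd ⟨h₃.1, h₃.2.2⟩ (hCB x₃)
  · exact ⟨⟨x₁, by grind⟩, ⟨y, by grind [hCB y]⟩, ⟨x₃, by grind⟩, ⟨x₄, by grind [hCB x₄]⟩⟩

theorem Nested.nested_inter_or_nested_inter_compl {A B C : Set V} (hCB : Nested C B) :
    Nested C (A ∩ B) ∨ Nested C (A ∩ Bᶜ) := by
  simp only [Nested, eq_empty_iff_forall_notMem, mem_inter_iff, mem_compl_iff] at hCB ⊢
  grind

def crossingCuts (D : Set V) (𝒞 : Set (Set V)) : Set (Set V) :=
  {C | C ∈ 𝒞 ∧ ¬ Nested C D}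

section

variable {A B : Set V} {𝒞 : Set (Set V)}

theorem crossingCuts_inter_subset (h𝒞B : ∀ C ∈ 𝒞, Nested C B) (hAB : (Aᶜ ∩ Bᶜ).Nonempty) :
    crossingCuts (A ∩ B) 𝒞 ⊆ crossingCuts A 𝒞 := fun C ⟨hC, hCAB⟩ =>
  ⟨hC, (h𝒞B C hC).not_nested_of_not_nested_inter hAB hCAB⟩

theorem disjoint_crossingCuts_inter (h𝒞B : ∀ C ∈ 𝒞, Nested C B) :
    Disjoint (crossingCuts (A ∩ B) 𝒞) (crossingCuts (A ∩ Bᶜ) 𝒞) :=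
  disjoint_left.2 fun C ⟨hC, h₁⟩ ⟨_, h₂⟩ =>
    (h𝒞B C hC).nested_inter_or_nested_inter_compl.elim h₁ h₂

end

theorem corners_mu_lt_general
    (𝒞 : Set (Set V))
    (h𝒞nested : ∀ C ∈ 𝒞, ∀ D ∈ 𝒞, Nested C D)
    (A : Set V)
    (B : Set V) (hB : B ∈ 𝒞) (hAB : ¬ Nested A B)
    (hfin : {C | C ∈ 𝒞 ∧ ¬ Nested C A}.Finite) :
    mu (A ∩ B) 𝒞 + mu (A ∩ Bᶜ) 𝒞 < mu A 𝒞 := by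
  obtain ⟨-, -, hAcB, hAcBc⟩ := (not_nested_iff A B).1 hAB
  have h𝒞B : ∀ C ∈ 𝒞, Nested C B := fun C hC => h𝒞nested C hC B hB
  have h₁ : crossingCuts (A ∩ B) 𝒞 ⊆ crossingCuts A 𝒞 := crossingCuts_inter_subset h𝒞B hAcBc
  have h₂ : crossingCuts (A ∩ Bᶜ) 𝒞 ⊆ crossingCuts A 𝒞 :=
    crossingCuts_inter_subset (fun C hC => (h𝒞B C hC).compl_right) (by rwa [compl_compl])
  have hssub : crossingCuts (A ∩ B) 𝒞 ∪ crossingCuts (A ∩ Bᶜ) 𝒞 ⊂ crossingCuts A 𝒞 := by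
    refine (ssubset_iff_of_subset (union_subset h₁ h₂)).2 ⟨B, ⟨hB, fun h => hAB h.symm⟩, ?_⟩
    rintro (⟨-, hB₁⟩ | ⟨-, hB₂⟩)
    · exact hB₁ (nested_of_subset inter_subset_right)
    · exact hB₂ (nested_of_disjoint (disjoint_compl_right.mono_right inter_subset_right))
  calc mu (A ∩ B) 𝒞 + mu (A ∩ Bᶜ) 𝒞
      = (crossingCuts (A ∩ B) 𝒞 ∪ crossingCuts (A ∩ Bᶜ) 𝒞).ncard :=
        (ncard_union_eq (disjoint_crossingCuts_inter h𝒞B) (hfin.subset h₁) (hfin.subset h₂)).symm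
    _ < mu A 𝒞 := ncard_lt_ncard hssub hfin

/-- if `𝒞` is a nested set of tight cuts and `A` is a tight cut not nested
with some `B ∈ 𝒞`, then `μ(A∩B, 𝒞) + μ(A∩B*, 𝒞) < μ(A, 𝒞)`. -/
theorem corners_mu_lt (G : SimpleGraph V) (hconn : G.Connected)
    (𝒞 : Set (Set V))
    (h𝒞cut : ∀ C ∈ 𝒞, IsCut G C ∧ Tight G C)
    (h𝒞nested : ∀ C ∈ 𝒞, ∀ D ∈ 𝒞, Nested C D)
    (A : Set V) (hAcut : IsCut G A) (hAtight : Tight G A)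
    (B : Set V) (hB : B ∈ 𝒞) (hAB : ¬ Nested A B)
    (hfin : {C | C ∈ 𝒞 ∧ ¬ Nested C A}.Finite) :
    mu (A ∩ B) 𝒞 + mu (A ∩ Bᶜ) 𝒞 < mu A 𝒞 :=
  corners_mu_lt_general 𝒞 h𝒞nested A B hB hAB hfin
end
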